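/- arXiv:2106.10912 — 2 statements merged into one kernel-verified Lean document; each statement's English description precedes it below -/
import Mathlib

section
/- Let I be a zero-dimensional ideal of k[x_1,...,x_n] (k of characteristic 0) and suppose the minimal polynomial m of the image of a linear form u in k[x_1,...,x_n]/I has degree d = dim_k(k[x_1,...,x_n]/I). Then I is a radical ideal if and only if m is squarefree. -/
/-!
In `A = k[x₁,…,xₙ]/I` the subalgebra `k[u] ≃ k[X]/(m)` has dimension `deg m = dim_k A`, so it
is all of `A`. Hence `I` is radical iff `A` is reduced iff `(m)` is a
radical ideal of the principal ideal domain `k[X]` iff `m` is squarefree.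
-/

open Polynomial Module

theorem isReduced_quotient_span_singleton_iff_squarefree {R : Type*} [CommRing R]
    [IsCancelMulZero R] [DecompositionMonoid R] {p : R} (hp : p ≠ 0) :
    IsReduced (R ⧸ Ideal.span {p}) ↔ Squarefree p := by
  rw [← Ideal.isRadical_iff_quotient_reduced, ← isRadical_iff_span_singleton,
    isRadical_iff_squarefree_of_ne_zero hp]

section

variable {k A : Type*} [Field k] [CommRing A] [Algebra k A]

theorem Algebra.adjoin_singleton_eq_top_of_natDegree_minpoly_eq_finrank [FiniteDimensional k A]
    {x : A} (h : (minpoly k x).natDegree = finrank k A) : Algebra.adjoin k {x} = ⊤ := by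
  have hx : IsIntegral k x := .of_finite k x
  refine Algebra.toSubmodule_eq_top.1 (Submodule.eq_top_of_finrank_eq ?_)
  rw [Subalgebra.finrank_toSubmodule, (Algebra.adjoin.powerBasis hx).finrank,
    Algebra.adjoin.powerBasis_dim, h]

theorem isReduced_iff_squarefree_minpoly_of_adjoin_eq_top {x : A} (hx : IsIntegral k x)
    (htop : Algebra.adjoin k {x} = ⊤) : IsReduced A ↔ Squarefree (minpoly k x) := by
  have hsurj : Function.Surjective (aeval x : k[X] →ₐ[k] A) := by
    rw [← AlgHom.range_eq_top, ← Algebra.adjoin_singleton_eq_range_aeval, htop]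
  let e : (k[X] ⧸ Ideal.span {minpoly k x}) ≃ₐ[k] A :=
    (Ideal.quotientEquivAlgOfEq k (minpoly.ker_aeval_eq_span_minpoly k x).symm).trans
      (Ideal.quotientKerAlgEquivOfSurjective hsurj)
  rw [← isReduced_quotient_span_singleton_iff_squarefree (minpoly.ne_zero hx)]
  exact ⟨fun _ ↦ isReduced_of_injective e e.injective,
    fun _ ↦ isReduced_of_injective e.symm e.symm.injective⟩

end

theorem stmt11_general (k : Type*) [Field k] (n : ℕ)
    (I : Ideal (MvPolynomial (Fin n) k))
    [FiniteDimensional k (MvPolynomial (Fin n) k ⧸ I)] (d : ℕ)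
    (hd : Module.finrank k (MvPolynomial (Fin n) k ⧸ I) = d)
    (u : MvPolynomial (Fin n) k ⧸ I)
    (hdeg : (minpoly k u).natDegree = d) :
    I.IsRadical ↔ Squarefree (minpoly k u) := by
  rw [Ideal.isRadical_iff_quotient_reduced]
  exact isReduced_iff_squarefree_minpoly_of_adjoin_eq_top (.of_finite k u)
    (Algebra.adjoin_singleton_eq_top_of_natDegree_minpoly_eq_finrank (hdeg.trans hd.symm))

theorem stmt11 (k : Type*) [Field k] [CharZero k] (n : ℕ)
    (I : Ideal (MvPolynomial (Fin n) k))
    [FiniteDimensional k (MvPolynomial (Fin n) k ⧸ I)] (d : ℕ)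
    (hd : Module.finrank k (MvPolynomial (Fin n) k ⧸ I) = d)
    (c : Fin n → k)
    (u : MvPolynomial (Fin n) k ⧸ I)
    (hu : u = Ideal.Quotient.mk I (∑ i, MvPolynomial.C (c i) * MvPolynomial.X i))
    (hdeg : (minpoly k u).natDegree = d) :
    I.IsRadical ↔ Squarefree (minpoly k u) :=
  stmt11_general k n I d hd u hdeg
end

section
/- Let I be a zero-dimensional ideal of k[x_1,...,x_n], and suppose the minimal polynomial m of the image of a variable x_n in k[x_1,...,x_n]/I is not squarefree. Let m* = m / gcd(m, m') be its squarefree part. Then the ideal I + (m*(x_n)) contains I strictly, its radical equals the radical of I, and m*(x_n) vanishes on the whole variety V(I). -/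
/-!
In characteristic zero a root of multiplicity `r` of `m` is a root of multiplicity `r - 1` of
`m'`, hence of multiplicity at most `r - 1` of `gcd(m, m')`, so it is still a root of
`m* = m / gcd(m, m')`. Over an algebraic closure this gives `m ∣ m* ^ N`, i.e.
`m*(x_n) ^ N ∈ I`, which yields the radical and the vanishing statements. The inclusion is
strict because `m ∣ m*` would force `gcd(m, m')` to be a unit, making `m` separable and hence
squarefree.
-/

open Polynomial

namespace Polynomial

theorem isRoot_of_mul_eq_of_dvd_derivative {K : Type*} [Field K] [CharZero K] {f g q : K[X]}
    (hf : f ≠ 0) (hgq : g * q = f) (hg : g ∣ derivative f) {a : K} (ha : f.IsRoot a) :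
    q.IsRoot a := by
  have hf' : derivative f ≠ 0 := by
    intro h
    obtain ⟨c, rfl⟩ : ∃ c, f = C c :=
      ⟨_, eq_C_of_natDegree_eq_zero (derivative_eq_zero.mp h)⟩
    exact hf (by simpa using ha)
  have hmul := rootMultiplicity_mul (x := a) (hgq ▸ hf)
  have hg_le := rootMultiplicity_le_rootMultiplicity_of_dvd hf' hg a
  rw [derivative_rootMultiplicity_of_root ha] at hg_le
  rw [hgq] at hmul
  have hpos := (rootMultiplicity_pos hf).mpr ha
  exact (rootMultiplicity_pos (right_ne_zero_of_mul (hgq ▸ hf))).mp (by omega)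

theorem exists_dvd_pow_of_mul_eq_of_dvd_derivative {k : Type*} [Field k] [CharZero k]
    {f g q : k[X]} (hf : f ≠ 0) (hgq : g * q = f) (hg : g ∣ derivative f) :
    ∃ N : ℕ, f ∣ q ^ N := by
  set K := AlgebraicClosure k
  have hfK : f.map (algebraMap k K) ≠ 0 :=
    (Polynomial.map_ne_zero_iff (algebraMap k K).injective).mpr hf
  have hqK : q.map (algebraMap k K) ≠ 0 := by
    refine (Polynomial.map_ne_zero_iff (algebraMap k K).injective).mpr ?_
    rintro rfl; exact hf (by simp [← hgq])
  refine ⟨(f.map (algebraMap k K)).roots.card, ?_⟩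
  rw [← map_dvd_map' (algebraMap k K), Polynomial.map_pow,
    IsAlgClosed.dvd_iff_roots_le_roots hfK (pow_ne_zero _ hqK), roots_pow,
    Multiset.le_card_smul_iff_subset]
  intro a ha
  rw [mem_roots hfK] at ha
  rw [mem_roots hqK]
  exact isRoot_of_mul_eq_of_dvd_derivative hfK (by rw [← Polynomial.map_mul, hgq])
    (by rw [derivative_map]; exact Polynomial.map_dvd _ hg) ha

theorem not_dvd_div_gcd_derivative {k : Type*} [Field k] [DecidableEq k] {f : k[X]}
    (hf0 : f ≠ 0) (hf : ¬ Squarefree f) : ¬ f ∣ f / EuclideanDomain.gcd f (derivative f) := by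
  set g := EuclideanDomain.gcd f (derivative f)
  have hg0 : g ≠ 0 := fun h => hf0 (EuclideanDomain.gcd_eq_zero_iff.mp h).1
  have hgq : g * (f / g) = f :=
    EuclideanDomain.mul_div_cancel' hg0 (EuclideanDomain.gcd_dvd_left _ _)
  intro hdvd
  have hg1 : g ∣ 1 := by
    rw [← mul_dvd_mul_iff_right (right_ne_zero_of_mul (hgq ▸ hf0)), one_mul, hgq]
    exact hdvd
  exact hf (Separable.squarefree (EuclideanDomain.gcd_isUnit_iff.mp (isUnit_of_dvd_one hg1)))

end Polynomial

theorem Ideal.aeval_mem_iff_minpoly_dvd {k R : Type*} [Field k] [CommRing R] [Algebra k R]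
    (I : Ideal R) (x : R) (q : k[X]) :
    aeval x q ∈ I ↔ minpoly k (Ideal.Quotient.mk I x) ∣ q := by
  rw [minpoly.dvd_iff, ← Ideal.Quotient.eq_zero_iff_mem, ← Ideal.Quotient.mkₐ_eq_mk k,
    aeval_algHom_apply]

theorem Ideal.radical_sup_span_singleton_of_mem_radical {R : Type*} [CommSemiring R]
    {I : Ideal R} {f : R} (hf : f ∈ I.radical) : (I ⊔ Ideal.span {f}).radical = I.radical :=
  le_antisymm (Ideal.radical_le_radical_iff.mpr
      (sup_le Ideal.le_radical ((Ideal.span_singleton_le_iff_mem _).mpr hf)))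
    (Ideal.radical_mono le_sup_left)

open scoped Classical in
theorem stmt18 (k : Type*) [Field k] [CharZero k] (n : ℕ)
    (I : Ideal (MvPolynomial (Fin n) k))
    [FiniteDimensional k (MvPolynomial (Fin n) k ⧸ I)]
    (i : Fin n) (m : Polynomial k)
    (hm : m = minpoly k (Ideal.Quotient.mk I (MvPolynomial.X i)))
    (hns : ¬ Squarefree m)
    (mstar : Polynomial k)
    (hmstar : mstar = m / EuclideanDomain.gcd m m.derivative) :
    I < I ⊔ Ideal.span {Polynomial.aeval (MvPolynomial.X i : MvPolynomial (Fin n) k) mstar} ∧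
    (I ⊔ Ideal.span
        {Polynomial.aeval (MvPolynomial.X i : MvPolynomial (Fin n) k) mstar}).radical =
      I.radical ∧
    ∀ p : Fin n → AlgebraicClosure k,
      (∀ f ∈ I, MvPolynomial.aeval p f = 0) → Polynomial.aeval (p i) mstar = 0 := by
  have hm0 : m ≠ 0 := hm ▸ minpoly.ne_zero (IsIntegral.of_finite k _)
  have hmem (q : k[X]) : aeval (MvPolynomial.X i) q ∈ I ↔ m ∣ q :=
    hm ▸ Ideal.aeval_mem_iff_minpoly_dvd I _ q
  set g := EuclideanDomain.gcd m (derivative m)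
  have hg0 : g ≠ 0 := fun h => hm0 (EuclideanDomain.gcd_eq_zero_iff.mp h).1
  have hgm : g * mstar = m :=
    hmstar ▸ EuclideanDomain.mul_div_cancel' hg0 (EuclideanDomain.gcd_dvd_left _ _)
  obtain ⟨N, hN⟩ := exists_dvd_pow_of_mul_eq_of_dvd_derivative hm0 hgm
    (EuclideanDomain.gcd_dvd_right _ _)
  have hpow : aeval (MvPolynomial.X i) mstar ^ N ∈ I := by rwa [← map_pow, hmem]
  refine ⟨left_lt_sup.mpr ?_,
    Ideal.radical_sup_span_singleton_of_mem_radical ⟨N, hpow⟩, fun p hp => ?_⟩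
  · rw [Ideal.span_singleton_le_iff_mem, hmem, hmstar]
    exact not_dvd_div_gcd_derivative hm0 hns
  · have hzero : MvPolynomial.aeval p (aeval (MvPolynomial.X i) mstar) = 0 :=
      IsNilpotent.eq_zero ⟨N, by rw [← map_pow]; exact hp _ hpow⟩
    rwa [← aeval_algHom_apply, MvPolynomial.aeval_X] at hzero
end
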